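/- Let x* be an optimal solution to the LP min ⟨c,x⟩ s.t. Ax = b, x ≥ 0, and suppose the corresponding integer program (same constraints with x ∈ Z^n) is feasible. Then there exists an optimal solution x̂ of the integer program with ‖x̂ − x*‖_∞ ≤ n · κ̄_A. -/

import Mathlib

open Finset

variable {ι : Type*} [Fintype ι] [DecidableEq ι]

/-- `y` conforms to `x` if `x i * y i > 0` whenever `y i ≠ 0`. -/
def Conforms (y x : ι → ℝ) : Prop := ∀ i, y i ≠ 0 → x i * y i > 0

/-- An elementary vector of `W`: a support-minimal nonzero vector of `W`. -/
def IsElementary (W : Submodule ℝ (ι → ℝ)) (g : ι → ℝ) : Prop :=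
  g ∈ W ∧ g ≠ 0 ∧
    ∀ h ∈ W, h ≠ 0 → {i | h i ≠ 0} ⊆ {i | g i ≠ 0} → {i | h i ≠ 0} = {i | g i ≠ 0}

/-- The fractional circuit imbalance measure `κ_W`. -/
noncomputable def kappa (W : Submodule ℝ (ι → ℝ)) : ℝ :=
  sSup ({1} ∪ {t : ℝ | ∃ g : ι → ℝ, IsElementary W g ∧
    ∃ i j, g i ≠ 0 ∧ g j ≠ 0 ∧ t = |g j| / |g i|})

/-- An integer elementary vector, normalized so that the gcd of its entries is 1. -/
def IsIntElementary (W : Submodule ℝ (ι → ℝ)) (g : ι → ℤ) : Prop :=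
  IsElementary W (fun i => (g i : ℝ)) ∧ Finset.univ.gcd (fun i => (g i).natAbs) = 1

/-- The max-circuit imbalance measure `κ̄_W`. -/
noncomputable def barKappa (W : Submodule ℝ (ι → ℝ)) : ℕ :=
  sSup {k : ℕ | ∃ g : ι → ℤ, IsIntElementary W g ∧
    k = Finset.univ.sup fun i => (g i).natAbs}

/-- The lcm-circuit imbalance measure `κ̇_W`: the least positive integer divisible by
every entry of every normalized integer elementary vector. -/
noncomputable def dotKappa (W : Submodule ℝ (ι → ℝ)) : ℕ :=
  sInf {k : ℕ | 0 < k ∧ ∀ g : ι → ℤ, IsIntElementary W g → ∀ i, g i ≠ 0 → (g i).natAbs ∣ k}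

/-- A rational linear subspace: one spanned by rational vectors. -/
def IsRationalSubspace (W : Submodule ℝ (ι → ℝ)) : Prop :=
  ∃ S : Set (ι → ℚ), W = Submodule.span ℝ ((fun v : ι → ℚ => fun i => ((v i : ℝ))) '' S)

/-- The orthogonal complement of `W` in `ℝ^ι` with the standard inner product. -/
def orthComp (W : Submodule ℝ (ι → ℝ)) : Submodule ℝ (ι → ℝ) where
  carrier := {v | ∀ w ∈ W, ∑ i, v i * w i = 0}
  add_mem' := by
    intro a b ha hb w hw
    have := ha w hw
    have := hb w hw
    simp only [Set.mem_setOf_eq, Pi.add_apply, add_mul, Finset.sum_add_distrib, *]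
    ring
  zero_mem' := by intro w hw; simp
  smul_mem' := by
    intro c a ha w hw
    have h := ha w hw
    simp only [Set.mem_setOf_eq, Pi.smul_apply, smul_eq_mul, mul_assoc, ← Finset.mul_sum, h,
      mul_zero]

/-!
Let `z` be any integer solution. The vector `x* - z` lies in `ker A`, so it is a conformal sum
`∑ λₚ gₚ` (`λₚ > 0`) of at most `n` normalized integer circuits `gₚ`, all with the sign pattern
of `x* - z`. Rounding the coefficients down gives the integer solution `z + ∑ ⌊λₚ⌋ gₚ`: it is
nonnegative because every partial sum of a conformal decomposition lies coordinatewise between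
`z` and `x*`; it differs from `x*` by `∑ fract(λₚ) gₚ`, of norm at most `n κ̄_A`; and it costs
no more than `z`, since `x* - λₚ gₚ` is LP-feasible and hence `⟨c, gₚ⟩ ≤ 0`. So a cheapest
integer solution in the finite box of radius `n κ̄_A` around `x*` is optimal for the IP.
-/

open Matrix

section Conformal

variable {σ : Type*}

theorem Conforms.refl (x : σ → ℝ) : Conforms x x := fun _ hx => mul_self_pos.2 hx

theorem Conforms.trans {x y z : σ → ℝ} (hxy : Conforms x y) (hyz : Conforms y z) :
    Conforms x z := by
  intro i hx
  have hyx := hxy i hx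
  have hzy := hyz i (left_ne_zero_of_mul hyx.ne')
  by_contra! h
  nlinarith [mul_pos hzy hyx, mul_nonpos_of_nonpos_of_nonneg h (mul_self_nonneg (y i))]

theorem Conforms.smul {y x : σ → ℝ} (h : Conforms y x) {t : ℝ} (ht : 0 < t) :
    Conforms (t • y) x := by
  intro i hi
  have hy : y i ≠ 0 := right_ne_zero_of_mul (by simpa using hi)
  simpa [mul_left_comm] using mul_pos ht (h i hy)

theorem Conforms.nonneg {y x : σ → ℝ} (h : Conforms y x) {i : σ} (hx : 0 ≤ x i) : 0 ≤ y i := by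
  by_contra! hy
  nlinarith [h i hy.ne]

theorem Conforms.nonpos {y x : σ → ℝ} (h : Conforms y x) {i : σ} (hx : x i ≤ 0) : y i ≤ 0 := by
  by_contra! hy
  nlinarith [h i hy.ne']

theorem Conforms.card_support_lt [Fintype σ] {y x : σ → ℝ} (h : Conforms y x) {j : σ}
    (hxj : x j ≠ 0) (hyj : y j = 0) : #{i | y i ≠ 0} < #{i | x i ≠ 0} := by
  refine card_lt_card ⟨fun i hi => ?_, fun hsub => ?_⟩
  · simp only [mem_filter, mem_univ, true_and] at hi ⊢
    exact left_ne_zero_of_mul (h i hi).ne'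
  · simpa [hxj, hyj] using @hsub j

theorem exists_sub_smul_conforms [Fintype σ] {v h : σ → ℝ} (hsupp : ∀ i, h i ≠ 0 → v i ≠ 0)
    (hpos : ∃ i, 0 < v i * h i) :
    ∃ t : ℝ, 0 < t ∧ Conforms (v - t • h) v ∧ ∃ j, v j ≠ 0 ∧ (v - t • h) j = 0 := by
  obtain ⟨j, hj, hjmin⟩ := exists_min_image {i | 0 < v i * h i} (fun i => v i / h i)
    (by simpa [Finset.Nonempty] using hpos)
  simp only [mem_filter, mem_univ, true_and] at hj hjmin
  have hhj : h j ≠ 0 := right_ne_zero_of_mul hj.ne'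
  have ht : 0 < v j / h j := by
    rw [← mul_div_mul_right _ _ hhj]
    exact div_pos hj (mul_self_pos.2 hhj)
  refine ⟨v j / h j, ht, fun i hi => ?_, j, left_ne_zero_of_mul hj.ne', ?_⟩
  · have hvi : v i ≠ 0 := by
      rintro hv
      have hhi : h i = 0 := by_contra fun hh => hsupp i hh hv
      simp [hv, hhi] at hi
    have hnonneg : 0 ≤ v i * (v i - v j / h j * h i) := by
      rcases le_or_gt (v i * h i) 0 with hneg | hposi
      · nlinarith [mul_self_pos.2 hvi]
      · have hhi : h i ≠ 0 := right_ne_zero_of_mul hposi.ne'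
        have hmin : v j / h j * (v i * h i) ≤ v i * v i :=
          calc _ ≤ v i / h i * (v i * h i) := mul_le_mul_of_nonneg_right (hjmin i hposi) hposi.le
            _ = v i * v i := by field_simp
        linear_combination hmin
    exact lt_of_le_of_ne hnonneg (mul_ne_zero hvi hi).symm
  · simp [div_mul_cancel₀ _ hhj]

end Conformal

section Elementary

variable {σ : Type*} {W : Submodule ℝ (σ → ℝ)}

theorem IsElementary.smul {g : σ → ℝ} (hg : IsElementary W g) {t : ℝ} (ht : t ≠ 0) :
    IsElementary W (t • g) := by
  have hsupp : {i | (t • g) i ≠ 0} = {i | g i ≠ 0} := by ext i; simp [ht]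
  refine ⟨W.smul_mem t hg.1, smul_ne_zero ht hg.2.1, fun h hW h0 hsub => ?_⟩
  rw [hsupp] at hsub ⊢
  exact hg.2.2 h hW h0 hsub

theorem IsElementary.exists_eq_smul {g h : σ → ℝ} (hg : IsElementary W g) (hh : h ∈ W)
    (hsupp : ∀ i, h i ≠ 0 → g i ≠ 0) : ∃ t : ℝ, h = t • g := by
  obtain ⟨i₀, hi₀⟩ := Function.ne_iff.1 hg.2.1
  refine ⟨h i₀ / g i₀, sub_eq_zero.1 (by_contra fun hne => ?_)⟩
  have hsub : {i | (h - (h i₀ / g i₀) • g) i ≠ 0} ⊆ {i | g i ≠ 0} := fun i hi => by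
    by_contra hgi
    simp_all
  have := hg.2.2 _ (W.sub_mem hh (W.smul_mem _ hg.1)) hne hsub
  have hi₀' : i₀ ∈ {i | (h - (h i₀ / g i₀) • g) i ≠ 0} := this ▸ hi₀
  simp [div_mul_cancel₀ _ hi₀] at hi₀'

theorem exists_isElementary_conforms [Fintype σ] {v : σ → ℝ} (hv : v ∈ W) (hv0 : v ≠ 0) :
    ∃ g, IsElementary W g ∧ Conforms g v := by
  induction hn : #{i | v i ≠ 0} using Nat.strong_induction_on generalizing v with
  | _ n ih =>
  by_cases hel : IsElementary W v
  · exact ⟨v, hel, Conforms.refl v⟩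
  obtain ⟨h, hhW, hh0, hsub, hne⟩ : ∃ h ∈ W, h ≠ 0 ∧ {i | h i ≠ 0} ⊆ {i | v i ≠ 0} ∧
      {i | h i ≠ 0} ≠ {i | v i ≠ 0} := by
    simpa [IsElementary, hv, hv0] using hel
  obtain ⟨i₁, hvi₁, hhi₁⟩ := Set.exists_of_ssubset (hsub.ssubset_of_ne hne)
  obtain ⟨i₂, hi₂⟩ := Function.ne_iff.1 hh0
  have hsupp : ∀ i, h i ≠ 0 → v i ≠ 0 := fun i hi => hsub hi
  obtain ⟨h', hh'W, hsupp', hh'i₁, hpos⟩ : ∃ h' ∈ W, (∀ i, h' i ≠ 0 → v i ≠ 0) ∧ h' i₁ = 0 ∧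
      ∃ i, 0 < v i * h' i := by
    rcases (mul_ne_zero (hsupp i₂ hi₂) hi₂).lt_or_gt with hlt | hgt
    · exact ⟨-h, W.neg_mem hhW, by simpa using hsupp, by simpa using hhi₁, i₂, by simpa⟩
    · exact ⟨h, hhW, hsupp, by simpa using hhi₁, i₂, hgt⟩
  obtain ⟨t, -, hconf, j, hvj, hj⟩ := exists_sub_smul_conforms hsupp' hpos
  have hne0 : v - t • h' ≠ 0 := Function.ne_iff.2 ⟨i₁, by simpa [hh'i₁] using hvi₁⟩
  obtain ⟨g, hg, hgconf⟩ := ih _ (hn ▸ hconf.card_support_lt hvj hj)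
    (W.sub_mem hv (W.smul_mem t hh'W)) hne0 rfl
  exact ⟨g, hg, hgconf.trans hconf⟩

theorem exists_sum_isElementary_conforms [Fintype σ] {w : σ → ℝ} (hw : w ∈ W) :
    ∃ (k : ℕ) (g : Fin k → σ → ℝ), k ≤ #{i | w i ≠ 0} ∧ (∀ p, IsElementary W (g p)) ∧
      (∀ p, Conforms (g p) w) ∧ w = ∑ p, g p := by
  induction hn : #{i | w i ≠ 0} using Nat.strong_induction_on generalizing w with
  | _ n ih =>
  by_cases hw0 : w = 0
  · exact ⟨0, Fin.elim0, Nat.zero_le _, fun p => p.elim0, fun p => p.elim0, by simp [hw0]⟩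
  obtain ⟨g, hg, hgw⟩ := exists_isElementary_conforms hw hw0
  obtain ⟨i, hi⟩ := Function.ne_iff.1 hg.2.1
  obtain ⟨t, ht, hconf, j, hwj, hj⟩ :=
    exists_sub_smul_conforms (fun i hi => left_ne_zero_of_mul (hgw i hi).ne') ⟨i, hgw i hi⟩
  have hlt := hn ▸ hconf.card_support_lt hwj hj
  obtain ⟨k, g', hk, hg', hg'w, hsum⟩ := ih _ hlt (W.sub_mem hw (W.smul_mem t hg.1)) rfl
  refine ⟨k + 1, Fin.cons (t • g) g', by omega, Fin.cases (hg.smul ht.ne') hg',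
    Fin.cases (hgw.smul ht) fun p => (hg'w p).trans hconf, ?_⟩
  rw [Fin.sum_univ_succ, Fin.cons_zero]
  simp only [Fin.cons_succ, ← hsum, add_sub_cancel]

end Elementary

section Integral

variable {σ τ : Type*} [Fintype σ]

/-- Both conditions say that the rational square matrix `Mᵀ * M` is singular. -/
theorem Matrix.exists_ne_zero_mulVec_eq_zero_of_map [Fintype τ] (M : Matrix τ σ ℚ)
    {v : σ → ℝ} (hv : v ≠ 0) (hMv : M.map ((↑) : ℚ → ℝ) *ᵥ v = 0) :
    ∃ q : σ → ℚ, q ≠ 0 ∧ M *ᵥ q = 0 := by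
  classical
  have hgram : (Mᵀ * M).map ((↑) : ℚ → ℝ) =
      (M.map ((↑) : ℚ → ℝ))ᵀ * M.map ((↑) : ℚ → ℝ) := by
    rw [← transpose_map]
    exact Matrix.map_mul (f := Rat.castHom ℝ)
  have hdetR : ((Mᵀ * M).map ((↑) : ℚ → ℝ)).det = 0 := by
    refine exists_mulVec_eq_zero_iff.1 ⟨v, hv, ?_⟩
    rw [hgram, ← mulVec_mulVec, hMv, mulVec_zero]
  have hdetQ : (Mᵀ * M).det = 0 := by
    have h := (Rat.castHom ℝ).map_det (Mᵀ * M)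
    exact Rat.cast_eq_zero.1 (h.trans hdetR)
  obtain ⟨q, hq, hMq⟩ := exists_mulVec_eq_zero_iff.2 hdetQ
  refine ⟨q, hq, ?_⟩
  have : q ∈ LinearMap.ker (Mᵀ * M).mulVecLin := hMq
  rwa [ker_mulVecLin_transpose_mul_self] at this

theorem exists_nat_mul_eq_int (q : σ → ℚ) :
    ∃ D : ℕ, 0 < D ∧ ∃ y : σ → ℤ, ∀ i, (y i : ℚ) = D * q i := by
  refine ⟨∏ i, (q i).den, prod_pos fun i _ => (q i).den_pos, ?_⟩
  have (i : σ) : ∃ y : ℤ, (y : ℚ) = (∏ j, (q j).den : ℕ) * q i := by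
    obtain ⟨e, he⟩ := dvd_prod_of_mem (fun j => (q j).den) (mem_univ i)
    refine ⟨(q i).num * e, ?_⟩
    rw [he]
    push_cast
    rw [← Rat.mul_den_eq_num]
    ring
  choose y hy using this
  exact ⟨y, hy⟩

theorem exists_gcd_natAbs_eq_one_mul {y : σ → ℤ} (hy : y ≠ 0) :
    ∃ z : σ → ℤ, univ.gcd (fun i => (z i).natAbs) = 1 ∧
      ∃ G : ℕ, 0 < G ∧ ∀ i, y i = G * z i := by
  obtain ⟨i₀, hi₀⟩ := Function.ne_iff.1 hy
  set G := univ.gcd fun i => (y i).natAbs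
  have hG : ∀ i, (G : ℤ) ∣ y i := fun i =>
    Int.natCast_dvd.2 (gcd_dvd (mem_univ i))
  refine ⟨fun i => y i / G, ?_, G, Nat.pos_of_ne_zero fun h0 => hi₀ ?_, fun i => ?_⟩
  · simp only [Int.natAbs_ediv_of_dvd (hG _), Int.natAbs_natCast]
    exact gcd_div_eq_one (mem_univ i₀) (by simpa using hi₀)
  · simpa using (gcd_eq_zero_iff.1 h0) i₀ (mem_univ i₀)
  · exact (Int.mul_ediv_cancel' (hG i)).symm

end Integral

section IntegerMatrix

variable {σ τ : Type*} [Fintype σ] {A : Matrix τ σ ℤ}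

theorem mem_ker_map_intCast_iff {v : σ → ℝ} :
    v ∈ LinearMap.ker (A.map (Int.cast : ℤ → ℝ)).mulVecLin ↔ A.map (Int.cast : ℤ → ℝ) *ᵥ v = 0 :=
  LinearMap.mem_ker

/-- `q` is a nonzero rational kernel vector of `A` stacked with the coordinate rows outside the
support of `g`. -/
theorem IsElementary.exists_rat_eq_smul [Fintype τ] {g : σ → ℝ}
    (hg : IsElementary (LinearMap.ker (A.map (Int.cast : ℤ → ℝ)).mulVecLin) g) :
    ∃ q : σ → ℚ, q ≠ 0 ∧ ∃ s : ℝ, (fun i => (q i : ℝ)) = s • g := by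
  classical
  set d : σ → ℚ := fun i => if g i = 0 then 1 else 0
  set M : Matrix (τ ⊕ σ) σ ℚ := fromRows (A.map (Int.cast : ℤ → ℚ)) (diagonal d)
  have hAcast : (A.map (Int.cast : ℤ → ℚ)).map ((↑) : ℚ → ℝ) = A.map (Int.cast : ℤ → ℝ) := by
    ext; simp
  have hMg : M.map ((↑) : ℚ → ℝ) *ᵥ g = 0 := by
    rw [fromRows_map, fromRows_mulVec, hAcast, mem_ker_map_intCast_iff.1 hg.1]
    ext (i | i)
    · rfl
    · by_cases hi : g i = 0 <;> simp [d, hi, mulVec_diagonal]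
  obtain ⟨q, hq0, hMq⟩ := M.exists_ne_zero_mulVec_eq_zero_of_map hg.2.1 hMg
  rw [fromRows_mulVec] at hMq
  have hAq : A.map (Int.cast : ℤ → ℚ) *ᵥ q = 0 := funext fun i => congrFun hMq (.inl i)
  have hqW : (fun i => (q i : ℝ)) ∈ LinearMap.ker (A.map (Int.cast : ℤ → ℝ)).mulVecLin := by
    rw [mem_ker_map_intCast_iff, ← hAcast]
    ext i
    simpa [hAq, Function.comp_def] using
      ((Rat.castHom ℝ).map_mulVec (A.map (Int.cast : ℤ → ℚ)) q i).symm
  have hqsupp (i : σ) (hqi : (q i : ℝ) ≠ 0) : g i ≠ 0 := fun hgi => hqi <| by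
    simpa [d, hgi, mulVec_diagonal] using congrFun hMq (.inr i)
  obtain ⟨s, hs⟩ := hg.exists_eq_smul hqW hqsupp
  exact ⟨q, hq0, s, hs⟩

theorem IsElementary.exists_isIntElementary_smul [Fintype τ] {g : σ → ℝ}
    (hg : IsElementary (LinearMap.ker (A.map (Int.cast : ℤ → ℝ)).mulVecLin) g) :
    ∃ z : σ → ℤ, IsIntElementary (LinearMap.ker (A.map (Int.cast : ℤ → ℝ)).mulVecLin) z ∧
      ∃ t : ℝ, 0 < t ∧ g = t • fun i => (z i : ℝ) := by
  obtain ⟨q, hq0, s, hs⟩ := hg.exists_rat_eq_smul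
  have hs0 : s ≠ 0 := by
    rintro rfl
    exact hq0 <| funext fun i => by simpa using congrFun hs i
  obtain ⟨D, hD, y, hy⟩ := exists_nat_mul_eq_int q
  have hy0 : y ≠ 0 := fun h0 => hq0 <| funext fun i => by
    simpa [h0, hD.ne'] using (hy i).symm
  obtain ⟨z, hz, G, hG, hyz⟩ := exists_gcd_natAbs_eq_one_mul hy0
  have hzg : (fun i => (z i : ℝ)) = (D * s / G) • g := by
    ext i
    have hyR : (y i : ℝ) = D * q i := by exact_mod_cast hy i
    have hyzR : (y i : ℝ) = G * z i := by exact_mod_cast hyz i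
    have hqg := congrFun hs i
    simp only [Pi.smul_apply, smul_eq_mul] at hqg ⊢
    field_simp
    linear_combination hyR - hyzR + D * hqg
  obtain ⟨z, hz, u, hu, hzg⟩ : ∃ z : σ → ℤ, univ.gcd (fun i => (z i).natAbs) = 1 ∧
      ∃ u : ℝ, 0 < u ∧ (fun i => (z i : ℝ)) = u • g := by
    rcases (by positivity : D * s / G ≠ 0).lt_or_gt with hneg | hpos
    · refine ⟨-z, by simpa using hz, -(D * s / G), neg_pos.2 hneg, ?_⟩
      rw [neg_smul, ← hzg]
      ext i
      simp
    · exact ⟨z, hz, _, hpos, hzg⟩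
  refine ⟨z, ⟨hzg ▸ hg.smul hu.ne', hz⟩, u⁻¹, inv_pos.2 hu, ?_⟩
  rw [hzg, smul_smul, inv_mul_cancel₀ hu.ne', one_smul]

end IntegerMatrix

section IntElementary

variable {σ : Type*} [Fintype σ] {W : Submodule ℝ (σ → ℝ)}

/-- The two vectors are proportional, and comparing the gcds of `|g i₀| • |g'|` and
`|g' i₀| • |g|` fixes the ratio up to sign. -/
theorem IsIntElementary.natAbs_eq_of_support_eq {g g' : σ → ℤ} (hg : IsIntElementary W g)
    (hg' : IsIntElementary W g') (hs : Function.support g' = Function.support g) :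
    (fun i => (g' i).natAbs) = fun i => (g i).natAbs := by
  obtain ⟨t, ht⟩ := hg.1.exists_eq_smul hg'.1.1 fun i hi => by
    have : i ∈ Function.support g := hs ▸ (by simpa using hi : g' i ≠ 0)
    simpa using this
  obtain ⟨i₀, hi₀⟩ := Function.ne_iff.1 hg.1.2.1
  have hprop (j : σ) : (g i₀).natAbs * (g' j).natAbs = (g' i₀).natAbs * (g j).natAbs := by
    rw [← Int.natAbs_mul, ← Int.natAbs_mul]
    congr 1
    have : (g i₀ * g' j : ℝ) = g' i₀ * g j := by
      rw [congrFun ht j, congrFun ht i₀]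
      simp only [Pi.smul_apply, smul_eq_mul]
      ring
    exact_mod_cast this
  have hgcd : (g i₀).natAbs = (g' i₀).natAbs := by
    simpa [Finset.gcd_mul_left, hg.2, hg'.2] using congrArg (univ.gcd ·) (funext hprop)
  ext j
  have := hprop j
  rw [← hgcd] at this
  exact Nat.eq_of_mul_eq_mul_left (Int.natAbs_pos.2 (by simpa using hi₀)) this

theorem IsIntElementary.natAbs_le_barKappa {g : σ → ℤ} (hg : IsIntElementary W g) (i : σ) :
    (g i).natAbs ≤ barKappa W := by
  have hfin : ((fun g (i : σ) => (g i).natAbs) '' {g | IsIntElementary W g}).Finite := by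
    refine Set.Finite.of_finite_image (f := Function.support) (Set.toFinite _) ?_
    rintro _ ⟨g, hg, rfl⟩ _ ⟨g', hg', rfl⟩ hs
    exact hg'.natAbs_eq_of_support_eq hg (by simpa [Function.support] using hs)
  have hbdd : BddAbove {k | ∃ g, IsIntElementary W g ∧ k = univ.sup fun i => (g i).natAbs} :=
    (hfin.image fun f => univ.sup f).bddAbove.mono <| by
      rintro _ ⟨g, hg, rfl⟩
      exact ⟨_, ⟨g, hg, rfl⟩, rfl⟩
  exact (le_sup (f := fun i => (g i).natAbs) (mem_univ i)).trans (le_csSup hbdd ⟨g, hg, rfl⟩)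

end IntElementary

section Proximity

variable {σ τ : Type*}

theorem exists_sum_smul_isIntElementary_conforms [Fintype σ] [Fintype τ] (A : Matrix τ σ ℤ)
    {w : σ → ℝ} (hw : w ∈ LinearMap.ker (A.map (Int.cast : ℤ → ℝ)).mulVecLin) :
    ∃ (k : ℕ) (lam : Fin k → ℝ) (g : Fin k → σ → ℤ), k ≤ #{i | w i ≠ 0} ∧
      (∀ p, IsIntElementary (LinearMap.ker (A.map (Int.cast : ℤ → ℝ)).mulVecLin) (g p)) ∧
      (∀ p, 0 < lam p) ∧ (∀ p, Conforms (fun i => (g p i : ℝ)) w) ∧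
      w = ∑ p, lam p • fun i => (g p i : ℝ) := by
  obtain ⟨k, h, hk, hel, hconf, hsum⟩ := exists_sum_isElementary_conforms hw
  choose g hg lam hlam hhg using fun p => (hel p).exists_isIntElementary_smul
  refine ⟨k, lam, g, hk, hg, hlam, fun p => ?_, hsum.trans (by simp only [← hhg])⟩
  have : (fun i => (g p i : ℝ)) = (lam p)⁻¹ • h p := by
    rw [hhg p, smul_smul, inv_mul_cancel₀ (hlam p).ne', one_smul]
  rw [this]
  exact (hconf p).smul (inv_pos.2 (hlam p))

theorem sum_smul_apply_mem_uIcc {κ : Type*} [Fintype κ] {y : κ → σ → ℝ} {μ ν : κ → ℝ}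
    {w : σ → ℝ} (hconf : ∀ p, Conforms (y p) w) (hw : w = ∑ p, μ p • y p)
    (hν : ∀ p, 0 ≤ ν p ∧ ν p ≤ μ p) (i : σ) : (∑ p, ν p • y p) i ∈ Set.uIcc 0 (w i) := by
  have hwi : w i = ∑ p, μ p * y p i := by simp [hw, Finset.sum_apply]
  simp only [Finset.sum_apply, Pi.smul_apply, smul_eq_mul, Set.mem_uIcc, hwi]
  rcases le_total 0 (w i) with h | h
  · have hy (p : κ) : 0 ≤ y p i := (hconf p).nonneg h
    exact .inl ⟨sum_nonneg fun p _ => mul_nonneg (hν p).1 (hy p),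
      sum_le_sum fun p _ => mul_le_mul_of_nonneg_right (hν p).2 (hy p)⟩
  · have hy (p : κ) : y p i ≤ 0 := (hconf p).nonpos h
    exact .inr ⟨sum_le_sum fun p _ => mul_le_mul_of_nonpos_right (hν p).2 (hy p),
      sum_nonpos fun p _ => mul_nonpos_of_nonneg_of_nonpos (hν p).1 (hy p)⟩

theorem smul_apply_mem_uIcc {κ : Type*} [Fintype κ] [DecidableEq κ] {y : κ → σ → ℝ}
    {μ : κ → ℝ} {w : σ → ℝ} (hconf : ∀ p, Conforms (y p) w) (hw : w = ∑ p, μ p • y p)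
    (hμ : ∀ p, 0 ≤ μ p) (p : κ) (i : σ) : μ p * y p i ∈ Set.uIcc 0 (w i) := by
  set ν : κ → ℝ := Pi.single p (μ p)
  have hν (q : κ) : 0 ≤ ν q ∧ ν q ≤ μ q := by
    rcases eq_or_ne q p with rfl | hq <;> simp [ν, *]
  simpa [ν, Pi.single_apply, ite_smul, ite_apply] using sum_smul_apply_mem_uIcc hconf hw hν i

theorem abs_sum_smul_apply_le_barKappa [Fintype σ] {W : Submodule ℝ (σ → ℝ)} {k : ℕ}
    {g : Fin k → σ → ℤ} (hg : ∀ p, IsIntElementary W (g p)) {ν : Fin k → ℝ}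
    (hν : ∀ p, 0 ≤ ν p ∧ ν p ≤ 1) (i : σ) :
    |(∑ p, ν p • fun i => (g p i : ℝ)) i| ≤ k * barKappa W := by
  simp only [Finset.sum_apply, Pi.smul_apply, smul_eq_mul]
  calc |∑ p, ν p * (g p i : ℝ)| ≤ ∑ p, |ν p * (g p i : ℝ)| := abs_sum_le_sum_abs _ _
    _ ≤ ∑ _p : Fin k, (barKappa W : ℝ) := sum_le_sum fun p _ => by
      have hκ : |(g p i : ℝ)| ≤ barKappa W := by
        rw [← Int.cast_abs, ← Int.natCast_natAbs]
        exact_mod_cast (hg p).natAbs_le_barKappa i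
      rw [abs_mul, abs_of_nonneg (hν p).1]
      exact (mul_le_of_le_one_left (abs_nonneg _) (hν p).2).trans hκ
    _ = k * barKappa W := by simp

theorem dotProduct_nonpos_of_sub_smul_feasible [Fintype σ] {M : Matrix τ σ ℝ} {b : τ → ℝ}
    {c xstar y : σ → ℝ} (hfeas : M *ᵥ xstar = b)
    (hopt : ∀ x, M *ᵥ x = b ∧ (∀ i, 0 ≤ x i) → c ⬝ᵥ xstar ≤ c ⬝ᵥ x) (hy : M *ᵥ y = 0) {t : ℝ}
    (ht : 0 < t) (hnonneg : ∀ i, 0 ≤ xstar i - t * y i) : c ⬝ᵥ y ≤ 0 := by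
  have := hopt (xstar - t • y) ⟨by rw [mulVec_sub, mulVec_smul, hfeas, hy, smul_zero, sub_zero],
    fun i => by simpa using hnonneg i⟩
  rw [dotProduct_sub, dotProduct_smul, smul_eq_mul] at this
  nlinarith

theorem exists_int_solution_near_lp_optimum [Fintype σ] [Fintype τ] (A : Matrix τ σ ℤ)
    (b : τ → ℝ) (c xstar : σ → ℝ)
    (hfeas : A.map (Int.cast : ℤ → ℝ) *ᵥ xstar = b ∧ ∀ i, 0 ≤ xstar i)
    (hopt : ∀ x, A.map (Int.cast : ℤ → ℝ) *ᵥ x = b ∧ (∀ i, 0 ≤ x i) → c ⬝ᵥ xstar ≤ c ⬝ᵥ x)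
    (z : σ → ℤ) (hz : A.map (Int.cast : ℤ → ℝ) *ᵥ (fun i => (z i : ℝ)) = b ∧ ∀ i, 0 ≤ z i) :
    ∃ x : σ → ℤ, (A.map (Int.cast : ℤ → ℝ) *ᵥ (fun i => (x i : ℝ)) = b ∧ ∀ i, 0 ≤ x i) ∧
      c ⬝ᵥ (fun i => (x i : ℝ)) ≤ c ⬝ᵥ (fun i => (z i : ℝ)) ∧
      ∀ i, |(x i : ℝ) - xstar i| ≤
        Fintype.card σ * barKappa (LinearMap.ker (A.map (Int.cast : ℤ → ℝ)).mulVecLin) := by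
  set Z : σ → ℝ := fun i => (z i : ℝ)
  have hZ (i : σ) : 0 ≤ Z i := Int.cast_nonneg (hz.2 i)
  obtain ⟨k, lam, g, hk, hg, hlam, hconf, hsum⟩ :=
    exists_sum_smul_isIntElementary_conforms A (w := xstar - Z) <| by
      rw [mem_ker_map_intCast_iff, mulVec_sub, hfeas.1, hz.1, sub_self]
  set G : Fin k → σ → ℝ := fun p i => (g p i : ℝ)
  have hbetween {u : ℝ} {i : σ} (hu : u ∈ Set.uIcc 0 ((xstar - Z) i)) :
      0 ≤ Z i + u ∧ 0 ≤ xstar i - u := by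
    have := hfeas.2 i
    have := hZ i
    rcases Set.mem_uIcc.1 hu with h | h <;> simp only [Pi.sub_apply] at h <;>
      constructor <;> linarith [h.1, h.2]
  have hcG (p : Fin k) : c ⬝ᵥ G p ≤ 0 :=
    dotProduct_nonpos_of_sub_smul_feasible hfeas.1 hopt (mem_ker_map_intCast_iff.1 (hg p).1.1)
      (hlam p) fun i => (hbetween (smul_apply_mem_uIcc hconf hsum (fun p => (hlam p).le) p i)).2
  have hfloor (p : Fin k) : 0 ≤ (⌊lam p⌋ : ℝ) ∧ (⌊lam p⌋ : ℝ) ≤ lam p :=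
    ⟨Int.cast_nonneg (Int.floor_nonneg.2 (hlam p).le), Int.floor_le _⟩
  set xhat : σ → ℤ := z + ∑ p, ⌊lam p⌋ • g p
  have hxhat : (fun i => (xhat i : ℝ)) = Z + ∑ p, (⌊lam p⌋ : ℝ) • G p := by
    ext i
    simp [xhat, Z, G, Finset.sum_apply]
  have hxstar : xstar = (fun i => (xhat i : ℝ)) + ∑ p, Int.fract (lam p) • G p := by
    rw [hxhat, add_assoc, ← sum_add_distrib]
    simp_rw [← add_smul, Int.floor_add_fract]
    rw [← hsum, add_sub_cancel]
  refine ⟨xhat, ⟨?_, fun i => ?_⟩, ?_, fun i => ?_⟩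
  · have hker : ∑ p, (⌊lam p⌋ : ℝ) • G p ∈ LinearMap.ker (A.map (Int.cast : ℤ → ℝ)).mulVecLin :=
      Submodule.sum_mem _ fun p _ => Submodule.smul_mem _ _ (hg p).1.1
    rw [hxhat, mulVec_add, hz.1, mem_ker_map_intCast_iff.1 hker, add_zero]
  · have : (0 : ℝ) ≤ xhat i := by
      rw [congrFun hxhat i]
      exact (hbetween (sum_smul_apply_mem_uIcc hconf hsum hfloor i)).1
    exact_mod_cast this
  · rw [hxhat, dotProduct_add, dotProduct_sum]
    simp only [dotProduct_smul, smul_eq_mul]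
    linarith [sum_nonpos fun p (_ : p ∈ univ) =>
      mul_nonpos_of_nonneg_of_nonpos (hfloor p).1 (hcG p)]
  · rw [congrFun hxstar i, Pi.add_apply, sub_add_cancel_left, abs_neg]
    calc _ ≤ (k : ℝ) * barKappa (LinearMap.ker (A.map (Int.cast : ℤ → ℝ)).mulVecLin) :=
          abs_sum_smul_apply_le_barKappa hg
            (fun p => ⟨Int.fract_nonneg _, (Int.fract_lt_one _).le⟩) i
      _ ≤ _ := by gcongr; exact_mod_cast hk.trans (card_le_univ _)

end Proximity

theorem finite_setOf_forall_abs_intCast_sub_le {σ : Type*} [Finite σ] (y : σ → ℝ) (B : ℝ) :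
    {x : σ → ℤ | ∀ i, |(x i : ℝ) - y i| ≤ B}.Finite := by
  refine (Set.Finite.pi fun i => Set.finite_Icc ⌈y i - B⌉ ⌊y i + B⌋).subset fun x hx i _ => ?_
  have := abs_le.1 (hx i)
  exact ⟨Int.ceil_le.2 (by linarith), Int.le_floor.2 (by linarith)⟩

/-- integer programming proximity: if `x*` is an optimal solution of the LP
`min ⟨c,x⟩, Ax = b, x ≥ 0` and the corresponding IP is feasible, then the IP has an
optimal solution `x̂` with `‖x̂ − x*‖_∞ ≤ n · κ̄_A`. -/
theorem ip_proximity {m n : ℕ} (A : Matrix (Fin m) (Fin n) ℤ) (b : Fin m → ℝ)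
    (c : Fin n → ℝ) (xstar : Fin n → ℝ)
    (hfeas : (A.map (Int.cast : ℤ → ℝ)).mulVec xstar = b ∧ ∀ i, 0 ≤ xstar i)
    (hopt : ∀ x : Fin n → ℝ, ((A.map (Int.cast : ℤ → ℝ)).mulVec x = b ∧ ∀ i, 0 ≤ x i) →
      ∑ i, c i * xstar i ≤ ∑ i, c i * x i)
    (hIPfeas : ∃ x : Fin n → ℤ,
      (A.map (Int.cast : ℤ → ℝ)).mulVec (fun i => ((x i : ℝ))) = b ∧ ∀ i, 0 ≤ x i) :
    ∃ xhat : Fin n → ℤ,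
      ((A.map (Int.cast : ℤ → ℝ)).mulVec (fun i => ((xhat i : ℝ))) = b ∧ ∀ i, 0 ≤ xhat i) ∧
      (∀ x : Fin n → ℤ,
        ((A.map (Int.cast : ℤ → ℝ)).mulVec (fun i => ((x i : ℝ))) = b ∧ ∀ i, 0 ≤ x i) →
        ∑ i, c i * (xhat i : ℝ) ≤ ∑ i, c i * (x i : ℝ)) ∧
      ∀ i, |(xhat i : ℝ) - xstar i| ≤
        n * (barKappa (LinearMap.ker (A.map (Int.cast : ℤ → ℝ)).mulVecLin) : ℝ) := by
  have near := exists_int_solution_near_lp_optimum A b c xstar hfeas hopt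
  simp only [Fintype.card_fin] at near
  set S := {x : Fin n → ℤ |
    ((A.map (Int.cast : ℤ → ℝ)).mulVec (fun i => (x i : ℝ)) = b ∧ ∀ i, 0 ≤ x i) ∧
    ∀ i, |(x i : ℝ) - xstar i| ≤
      n * (barKappa (LinearMap.ker (A.map (Int.cast : ℤ → ℝ)).mulVecLin) : ℝ)}
  have hS : S.Finite := (finite_setOf_forall_abs_intCast_sub_le xstar _).subset fun x hx => hx.2
  obtain ⟨z, hz⟩ := hIPfeas
  obtain ⟨x₀, hx₀, -, hx₀near⟩ := near z hz
  obtain ⟨xhat, ⟨hxhat, hxhat_near⟩, hmin⟩ :=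
    S.exists_min_image (fun x => c ⬝ᵥ fun i => (x i : ℝ)) hS ⟨x₀, hx₀, hx₀near⟩
  refine ⟨xhat, hxhat, fun x hx => ?_, hxhat_near⟩
  obtain ⟨x', hx', hcost, hx'near⟩ := near x hx
  exact (hmin x' ⟨hx', hx'near⟩).trans hcost
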